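/- arXiv:2004.04326 — 8 statements merged into one kernel-verified Lean document; each statement's English description precedes it below -/
import Mathlib

section
/- Let H be a real Hilbert space, let F : H → H be monotone, let G : H → Set H be monotone, and let μ ∈ (0,1) and γ, γ' > 0. Let p ∈ H satisfy 0 ∈ Fp + Gp, let w, y ∈ H satisfy w − γFw − y ∈ γ • Gy, suppose γ'·‖Fw − Fy‖ ≤ μ·‖w − y‖, and set z = y − γ(Fy − Fw). Then ‖z − p‖² ≤ ‖w − p‖² − (1 − μ²γ²/γ'²)·‖w − y‖². (Lemma 3.1, pointwise per-iteration form.) -/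
/-!
Expanding squares gives `‖w - p‖² - ‖z - p‖² = ‖w - y‖² - ‖γ (F y - F w)‖² + 2⟪w - y + γ (F y - F w), y - p⟫`.
The step size condition bounds the middle term by `μ²γ²/γ'² ‖w - y‖²`, and the inner product is
nonnegative by monotonicity of `F + G`: the vector `(w - y)/γ + F y - F w` lies in `(F + G) y`
while `0 ∈ (F + G) p`.
-/

open RealInnerProductSpace Pointwise

section

variable {H : Type*} [NormedAddCommGroup H] [InnerProductSpace ℝ H]

lemma norm_sub_sub_sq_eq (w y d p : H) :
    ‖y - d - p‖ ^ 2 = ‖w - p‖ ^ 2 - ‖w - y‖ ^ 2 + ‖d‖ ^ 2 - 2 * ⟪(w - y) + d, y - p⟫ := by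
  have hwp : w - p = (w - y) + (y - p) := by abel
  have hyp : y - d - p = (y - p) - d := by abel
  rw [hwp, hyp, norm_add_sq_real, norm_sub_sq_real, inner_add_left, real_inner_comm d]
  ring

lemma inner_add_nonneg_of_mem_of_neg_mem {F : H → H} {G : H → Set H}
    (hF : ∀ x y : H, 0 ≤ ⟪F x - F y, x - y⟫)
    (hG : ∀ x y p q : H, p ∈ G x → q ∈ G y → 0 ≤ ⟪p - q, x - y⟫)
    {p y u : H} (hu : u ∈ G y) (hp : -F p ∈ G p) :
    0 ≤ ⟪u + F y, y - p⟫ := by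
  have hsplit : u + F y = (u - -F p) + (F y - F p) := by abel
  rw [hsplit, inner_add_left]
  exact add_nonneg (hG y p u (-F p) hu hp) (hF y p)

lemma inner_forward_backward_step_nonneg {F : H → H} {G : H → Set H}
    (hF : ∀ x y : H, 0 ≤ ⟪F x - F y, x - y⟫)
    (hG : ∀ x y p q : H, p ∈ G x → q ∈ G y → 0 ≤ ⟪p - q, x - y⟫)
    {γ : ℝ} (hγ : 0 ≤ γ) {p w y : H} (hp : -F p ∈ G p) (hy : w - γ • F w - y ∈ γ • G y) :
    0 ≤ ⟪(w - y) + γ • (F y - F w), y - p⟫ := by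
  obtain ⟨u, hu, hγu⟩ := hy
  have hstep : (w - y) + γ • (F y - F w) = γ • (u + F y) := by
    rw [smul_add, show γ • u = w - γ • F w - y from hγu]
    module
  rw [hstep, real_inner_smul_left]
  exact mul_nonneg hγ (inner_add_nonneg_of_mem_of_neg_mem hF hG hu hp)

end

theorem lemma31_pointwise_general {H : Type*} [NormedAddCommGroup H] [InnerProductSpace ℝ H]
    (F : H → H) (G : H → Set H)
    (hF : ∀ x y : H, 0 ≤ ⟪F x - F y, x - y⟫)
    (hG : ∀ x y p q : H, p ∈ G x → q ∈ G y → 0 ≤ ⟪p - q, x - y⟫)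
    (μ γ γ' : ℝ) (hγ : 0 < γ) (hγ' : 0 < γ')
    (p : H) (hp : -F p ∈ G p)
    (w y z : H) (hy : w - γ • F w - y ∈ γ • G y)
    (hstep : γ' * ‖F w - F y‖ ≤ μ * ‖w - y‖)
    (hz : z = y - γ • (F y - F w)) :
    ‖z - p‖ ^ 2 ≤ ‖w - p‖ ^ 2 - (1 - μ ^ 2 * γ ^ 2 / γ' ^ 2) * ‖w - y‖ ^ 2 := by
  have hmono := inner_forward_backward_step_nonneg hF hG hγ.le hp hy
  have hcorr : ‖γ • (F y - F w)‖ ^ 2 ≤ μ ^ 2 * γ ^ 2 / γ' ^ 2 * ‖w - y‖ ^ 2 :=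
    calc ‖γ • (F y - F w)‖ ^ 2 = γ ^ 2 * ‖F w - F y‖ ^ 2 := by
          rw [norm_smul, norm_sub_rev, Real.norm_eq_abs, mul_pow, sq_abs]
      _ ≤ γ ^ 2 * (μ * ‖w - y‖ / γ') ^ 2 := by
          gcongr
          exact (le_div_iff₀ hγ').2 (by linarith)
      _ = μ ^ 2 * γ ^ 2 / γ' ^ 2 * ‖w - y‖ ^ 2 := by ring
  rw [hz, norm_sub_sub_sq_eq w]
  linarith

/-- Lemma 3.1 (pointwise per-iteration form): the fundamental estimate for one Tseng step. -/
theorem lemma31_pointwise {H : Type*} [NormedAddCommGroup H] [InnerProductSpace ℝ H]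
    [CompleteSpace H]
    (F : H → H) (G : H → Set H)
    (hF : ∀ x y : H, 0 ≤ ⟪F x - F y, x - y⟫)
    (hG : ∀ x y p q : H, p ∈ G x → q ∈ G y → 0 ≤ ⟪p - q, x - y⟫)
    (μ γ γ' : ℝ) (hμ : μ ∈ Set.Ioo (0 : ℝ) 1) (hγ : 0 < γ) (hγ' : 0 < γ')
    (p : H) (hp : -F p ∈ G p)
    (w y z : H) (hy : w - γ • F w - y ∈ γ • G y)
    (hstep : γ' * ‖F w - F y‖ ≤ μ * ‖w - y‖)
    (hz : z = y - γ • (F y - F w)) :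
    ‖z - p‖ ^ 2 ≤ ‖w - p‖ ^ 2 - (1 - μ ^ 2 * γ ^ 2 / γ' ^ 2) * ‖w - y‖ ^ 2 :=
  lemma31_pointwise_general F G hF hG μ γ γ' hγ hγ' p hp w y z hy hstep hz
end

section
/- Let H be a real Hilbert space, let F : H → H be monotone, let G : H → Set H be monotone, and let γ > 0. Let h, g, w, y ∈ H satisfy g − Fh ∈ Gh and w − γFw − y ∈ γ • Gy. Then ⟨h − y, g⟩ ≥ ⟨h − y, Fy − Fw⟩ + (1/γ)·⟨h − y, w − y⟩. (The key inequality in the proof of Lemma 3.2.) -/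
/-!
The resolvent step puts `(y, F y - F w + γ⁻¹ • (w - y))` in the graph of `F + G`, which is
monotone as a sum of monotone operators; comparing this pair with `(h, g)` is the inequality.
-/

open RealInnerProductSpace Pointwise

theorem inner_sub_nonneg_of_sub_mem_add_monotone {H : Type*} [NormedAddCommGroup H]
    [InnerProductSpace ℝ H] {F : H → H} {G : H → Set H}
    (hF : ∀ x y : H, 0 ≤ ⟪F x - F y, x - y⟫)
    (hG : ∀ x y p q : H, p ∈ G x → q ∈ G y → 0 ≤ ⟪p - q, x - y⟫)
    {x y p q : H} (hp : p - F x ∈ G x) (hq : q - F y ∈ G y) :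
    0 ≤ ⟪p - q, x - y⟫ := by
  have hsplit : p - q = (p - F x - (q - F y)) + (F x - F y) := by abel
  rw [hsplit, inner_add_left]
  exact add_nonneg (hG x y _ _ hp hq) (hF x y)

theorem sub_mem_of_mem_smul_resolvent {H : Type*} [NormedAddCommGroup H] [Module ℝ H]
    {F : H → H} {G : H → Set H} {γ : ℝ} (hγ : γ ≠ 0) {w y : H}
    (hy : w - γ • F w - y ∈ γ • G y) :
    F y - F w + γ⁻¹ • (w - y) - F y ∈ G y := by
  have hu := (Set.mem_smul_set_iff_inv_smul_mem₀ hγ _ _).1 hy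
  convert hu using 1
  rw [sub_right_comm, smul_sub, smul_sub, inv_smul_smul₀ hγ, smul_sub]
  abel

theorem key_ineq_lemma32_general {H : Type*} [NormedAddCommGroup H] [InnerProductSpace ℝ H]
    (F : H → H) (G : H → Set H)
    (hF : ∀ x y : H, 0 ≤ ⟪F x - F y, x - y⟫)
    (hG : ∀ x y p q : H, p ∈ G x → q ∈ G y → 0 ≤ ⟪p - q, x - y⟫)
    (γ : ℝ) (hγ : 0 < γ)
    (h g w y : H) (hhg : g - F h ∈ G h) (hy : w - γ • F w - y ∈ γ • G y) :
    ⟪h - y, F y - F w⟫ + (1 / γ) * ⟪h - y, w - y⟫ ≤ ⟪h - y, g⟫ := by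
  have hmono := inner_sub_nonneg_of_sub_mem_add_monotone hF hG hhg
    (sub_mem_of_mem_smul_resolvent hγ.ne' hy)
  rw [inner_sub_left, inner_add_left, inner_smul_left] at hmono
  simp only [real_inner_comm (h - y), RCLike.conj_to_real, one_div] at hmono ⊢
  linarith

/-- The key inequality in the proof of Lemma 3.2. -/
theorem key_ineq_lemma32 {H : Type*} [NormedAddCommGroup H] [InnerProductSpace ℝ H]
    [CompleteSpace H]
    (F : H → H) (G : H → Set H)
    (hF : ∀ x y : H, 0 ≤ ⟪F x - F y, x - y⟫)
    (hG : ∀ x y p q : H, p ∈ G x → q ∈ G y → 0 ≤ ⟪p - q, x - y⟫)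
    (γ : ℝ) (hγ : 0 < γ)
    (h g w y : H) (hhg : g - F h ∈ G h) (hy : w - γ • F w - y ∈ γ • G y) :
    ⟪h - y, F y - F w⟫ + (1 / γ) * ⟪h - y, w - y⟫ ≤ ⟪h - y, g⟫ :=
  key_ineq_lemma32_general F G hF hG γ hγ h g w y hhg hy
end

section
/- Let H be a real Hilbert space, let F : H → H be monotone and L-Lipschitz continuous with L > 0, and let G : H → Set H be maximal monotone. Let (x_n), (w_n), (y_n) be sequences in H and (γ_n) a sequence of positive reals converging to some γ > 0, such that w_n − γ_n F w_n − y_n ∈ γ_n • G y_n for all n, ‖w_n − x_n‖ → 0, and ‖w_n − y_n‖ → 0. If a subsequence (x_{n_k}) converges weakly to some q ∈ H, then 0 ∈ Fq + Gq. (Lemma 3.2.) -/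
/-!
Fix `(z, p)` in the graph of `G`. Monotonicity of `G` at the resolvent pair
`(y_n, (w_n - y_n) / γ_n - F w_n)`, together with monotonicity and Lipschitz continuity of `F`,
gives `γ_n ⟪F z + p, y_n - z⟫ ≤ (1 + γ_n L) ‖w_n - y_n‖ ‖y_n - z‖`. Along the subsequence, `y_{n_k}`
converges weakly to `q` and hence stays bounded, so in the limit `⟪F z + p, q - z⟫ ≤ 0`: the pair
`(q, 0)` is monotonically related to the graph of `F + G`. Since `F + G` is maximal monotone,
`0 ∈ F q + G q`; concretely, the point `y` with `q - F q / (2L) - y ∈ G y / (2L)` must be `q`.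

That resolvent point exists by Minty's theorem: minimizing the strongly convex function
`φ_G (x, u) + (‖x‖² + ‖u‖²) / 2` on `H × H`, where `φ_G` is the Fitzpatrick function of `G`, gives
a minimizer `(x, u)` such that `(-u, -x)` is monotonically related to the graph, hence in it, and
then `x + u = 0`.
-/

open RealInnerProductSpace Pointwise Filter

open Set Topology

theorem cauchySeq_of_norm_sub_sq_le {E : Type*} [SeminormedAddCommGroup E] {s : ℕ → E} {C : ℝ}
    (h : ∀ n m, ‖s n - s m‖ ^ 2 ≤ C * (1 / (n + 1) + 1 / (m + 1))) : CauchySeq s := by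
  have hC : 0 ≤ C := by nlinarith [h 0 0]
  refine cauchySeq_of_le_tendsto_0 (fun N => √(2 * C * (1 / (N + 1)))) (fun n m N hn hm => ?_) ?_
  · have hN (k : ℕ) (hk : N ≤ k) : (1 : ℝ) / (k + 1) ≤ 1 / (N + 1) :=
      one_div_le_one_div_of_le (by positivity) (by exact_mod_cast Nat.succ_le_succ hk)
    rw [dist_eq_norm]
    refine Real.le_sqrt_of_sq_le ((h n m).trans ?_)
    nlinarith [hN n hn, hN m hm]
  · simpa using ((tendsto_one_div_add_atTop_nhds_zero_nat (𝕜 := ℝ)).const_mul (2 * C)).sqrt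

section StrongConvexEpigraph

variable {E : Type*} [NormedAddCommGroup E] [InnerProductSpace ℝ E]

def StrongConvexEpigraph (S : Set (E × ℝ)) : Prop :=
  ∀ ⦃z z' : E⦄ ⦃r r' t : ℝ⦄, (z, r) ∈ S → (z', r') ∈ S → 0 ≤ t → t ≤ 1 →
    ((1 - t) • z + t • z', (1 - t) * r + t * r' - t * (1 - t) / 2 * ‖z - z'‖ ^ 2) ∈ S

theorem norm_sub_smul_add_smul_sq (t : ℝ) (z z' : E) :
    ‖(1 - t) • z + t • z'‖ ^ 2
      = (1 - t) * ‖z‖ ^ 2 + t * ‖z'‖ ^ 2 - t * (1 - t) * ‖z - z'‖ ^ 2 := by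
  rw [norm_add_sq_real, real_inner_smul_left, real_inner_smul_right, norm_smul, norm_smul,
    mul_pow, mul_pow, Real.norm_eq_abs, Real.norm_eq_abs, sq_abs, sq_abs, norm_sub_sq_real]
  ring

def quadraticEpigraph {ι : Type*} (c : ι → E) (d : ι → ℝ) : Set (E × ℝ) :=
  {p | ∀ i, ⟪c i, p.1⟫ + d i + ‖p.1‖ ^ 2 / 2 ≤ p.2}

theorem isClosed_quadraticEpigraph {ι : Type*} (c : ι → E) (d : ι → ℝ) :
    IsClosed (quadraticEpigraph c d) := by
  simp only [quadraticEpigraph, ofPred_forall]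
  exact isClosed_iInter fun i => isClosed_le (by fun_prop) continuous_snd

theorem strongConvexEpigraph_quadraticEpigraph {ι : Type*} (c : ι → E) (d : ι → ℝ) :
    StrongConvexEpigraph (quadraticEpigraph c d) := by
  intro z z' r r' t hz hz' ht0 ht1 i
  have := norm_sub_smul_add_smul_sq t z z'
  simp only [inner_add_right, real_inner_smul_right]
  linarith [mul_le_mul_of_nonneg_left (hz i) (sub_nonneg.2 ht1),
    mul_le_mul_of_nonneg_left (hz' i) ht0]

theorem StrongConvexEpigraph.exists_quadratic_growth [CompleteSpace E] {S : Set (E × ℝ)}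
    (hS : StrongConvexEpigraph S) (hclosed : IsClosed S) (hne : S.Nonempty)
    (hbdd : BddBelow (Prod.snd '' S)) :
    ∃ z₀ μ, (z₀, μ) ∈ S ∧ ∀ z r, (z, r) ∈ S → μ + ‖z - z₀‖ ^ 2 / 2 ≤ r := by
  set μ := sInf (Prod.snd '' S)
  have hμ {z r} (h : (z, r) ∈ S) : μ ≤ r := csInf_le hbdd ⟨_, h, rfl⟩
  have hmin (n : ℕ) : ∃ p ∈ S, p.2 < μ + 1 / (n + 1) := by
    obtain ⟨_, ⟨p, hp, rfl⟩, hlt⟩ :=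
      Real.lt_sInf_add_pos (hne.image Prod.snd) Nat.one_div_pos_of_nat
    exact ⟨p, hp, hlt⟩
  choose p hpS hp using hmin
  have hmid (n m : ℕ) : ‖(p n).1 - (p m).1‖ ^ 2 ≤ 4 * (1 / (n + 1) + 1 / (m + 1)) := by
    have := hμ (hS (hpS n) (hpS m) (t := 1 / 2) (by norm_num) (by norm_num))
    linarith [hp n, hp m, hμ (hpS n), hμ (hpS m)]
  obtain ⟨z₀, hz₀⟩ := cauchySeq_tendsto_of_complete (cauchySeq_of_norm_sub_sq_le hmid)
  have hr : Tendsto (fun n => (p n).2) atTop (𝓝 μ) := by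
    refine tendsto_of_tendsto_of_tendsto_of_le_of_le tendsto_const_nhds ?_ (fun n => hμ (hpS n))
      (fun n => (hp n).le)
    simpa using tendsto_const_nhds.add (tendsto_one_div_add_atTop_nhds_zero_nat (𝕜 := ℝ))
  have hz₀S : (z₀, μ) ∈ S :=
    hclosed.mem_of_tendsto (hz₀.prodMk_nhds hr) (Eventually.of_forall hpS)
  refine ⟨z₀, μ, hz₀S, fun z r hzr => ?_⟩
  -- interpolating between the minimizer and `(z, r)` with weight `t → 0⁺`
  have hgrowth : ∀ t ∈ Ioc (0 : ℝ) 1, (1 - t) * (‖z - z₀‖ ^ 2 / 2) ≤ r - μ := by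
    rintro t ⟨ht0, ht1⟩
    have := hμ (hS hz₀S hzr ht0.le ht1)
    rw [norm_sub_rev] at this
    nlinarith
  have hlim : Tendsto (fun t : ℝ => (1 - t) * (‖z - z₀‖ ^ 2 / 2)) (𝓝[>] 0)
      (𝓝 ((1 - 0) * (‖z - z₀‖ ^ 2 / 2))) :=
    ((continuous_const.sub continuous_id).mul continuous_const).continuousWithinAt.tendsto
  have := le_of_tendsto hlim (eventually_of_mem (Ioc_mem_nhdsGT one_pos) hgrowth)
  linarith

end StrongConvexEpigraph

section MonotoneOperator

variable {H : Type*} [NormedAddCommGroup H] [InnerProductSpace ℝ H] {G : H → Set H}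

theorem neg_mul_le_inner_sub_of_lipschitz {F : H → H} {L : ℝ}
    (hF : ∀ x y, ‖F x - F y‖ ≤ L * ‖x - y‖) (x y v : H) :
    -(L * (‖x - y‖ * ‖v‖)) ≤ ⟪F x - F y, v⟫ := by
  refine le_trans ?_ (neg_le_of_abs_le (abs_real_inner_le_norm _ _))
  rw [neg_le_neg_iff, ← mul_assoc]
  exact mul_le_mul_of_nonneg_right (hF x y) (norm_nonneg _)

def IsMonotoneOp (G : H → Set H) : Prop :=
  ∀ x y p q, p ∈ G x → q ∈ G y → 0 ≤ ⟪p - q, x - y⟫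

def IsMaximalMonotoneOp (G : H → Set H) : Prop :=
  IsMonotoneOp G ∧ ∀ x p, (∀ y q, q ∈ G y → 0 ≤ ⟪p - q, x - y⟫) → p ∈ G x

/-- The epigraph of `(x, u) ↦ φ_G (x, u) + (‖x‖² + ‖u‖²) / 2`, where `φ_G` is the Fitzpatrick
function of `G`. -/
def fitzpatrickEpigraph (G : H → Set H) : Set (WithLp 2 (H × H) × ℝ) :=
  quadraticEpigraph (fun i : {p : H × H // p.2 ∈ G p.1} => WithLp.toLp 2 (i.1.2, i.1.1))
    (fun i => -⟪i.1.1, i.1.2⟫)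

theorem mem_fitzpatrickEpigraph_iff {z : WithLp 2 (H × H)} {r : ℝ} :
    (z, r) ∈ fitzpatrickEpigraph G ↔
      ∀ a b, b ∈ G a → ‖z.fst + z.snd‖ ^ 2 / 2 - ⟪z.fst - a, z.snd - b⟫ ≤ r := by
  simp only [fitzpatrickEpigraph, quadraticEpigraph, mem_ofPred_eq, Subtype.forall, Prod.forall,
    WithLp.prod_inner_apply, WithLp.ofLp_fst, WithLp.ofLp_snd, WithLp.prod_norm_sq_eq_of_L2]
  refine forall₃_congr fun a b _ => iff_of_eq (congrArg (· ≤ r) ?_)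
  rw [norm_add_sq_real, inner_sub_left, inner_sub_right, inner_sub_right, real_inner_comm b z.fst]
  ring

theorem IsMonotoneOp.toLp_mem_fitzpatrickEpigraph (hG : IsMonotoneOp G) {a b : H}
    (hab : b ∈ G a) : (WithLp.toLp 2 (a, b), ‖a + b‖ ^ 2 / 2) ∈ fitzpatrickEpigraph G :=
  mem_fitzpatrickEpigraph_iff.2 fun a' b' h =>
    sub_le_self _ (by simpa [real_inner_comm] using hG _ _ _ _ hab h)

namespace IsMaximalMonotoneOp

theorem exists_mem (hG : IsMaximalMonotoneOp G) : ∃ a b, b ∈ G a := by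
  by_contra! h
  exact h 0 0 (hG.2 0 0 fun y q hq => absurd hq (h y q))

theorem norm_fst_add_snd_sq_div_two_le (hG : IsMaximalMonotoneOp G) {z : WithLp 2 (H × H)} {r : ℝ}
    (h : (z, r) ∈ fitzpatrickEpigraph G) : ‖z.fst + z.snd‖ ^ 2 / 2 ≤ r := by
  rw [mem_fitzpatrickEpigraph_iff] at h
  by_contra! hlt
  have hmem : z.snd ∈ G z.fst := hG.2 _ _ fun a b hab => by
    rw [real_inner_comm]
    linarith [h a b hab]
  simpa using (h _ _ hmem).trans_lt hlt

theorem exists_neg_mem [CompleteSpace H] (hG : IsMaximalMonotoneOp G) : ∃ y, -y ∈ G y := by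
  obtain ⟨a₀, b₀, hab₀⟩ := hG.exists_mem
  have hbdd : BddBelow (Prod.snd '' fitzpatrickEpigraph G) := ⟨0, by
    rintro _ ⟨⟨z, r⟩, h, rfl⟩
    exact (by positivity : (0 : ℝ) ≤ _).trans (hG.norm_fst_add_snd_sq_div_two_le h)⟩
  obtain ⟨z₀, μ, hz₀, hgrowth⟩ :=
    (strongConvexEpigraph_quadraticEpigraph _ _).exists_quadratic_growth
      (isClosed_quadraticEpigraph _ _) ⟨_, hG.1.toLp_mem_fitzpatrickEpigraph hab₀⟩ hbdd
  obtain ⟨x, u, rfl⟩ : ∃ x u, z₀ = WithLp.toLp 2 (x, u) := ⟨z₀.fst, z₀.snd, rfl⟩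
  have hμ := hG.norm_fst_add_snd_sq_div_two_le hz₀
  simp only [WithLp.toLp_fst, WithLp.toLp_snd] at hμ
  have key (a b : H) (hab : b ∈ G a) : ‖x + u‖ ^ 2 ≤ ⟪a + u, b + x⟫ := by
    have := hgrowth _ _ (hG.1.toLp_mem_fitzpatrickEpigraph hab)
    rw [WithLp.prod_norm_sq_eq_of_L2] at this
    simp only [WithLp.sub_fst, WithLp.sub_snd, WithLp.toLp_fst, WithLp.toLp_snd] at this
    rw [norm_sub_sq_real, norm_sub_sq_real, norm_add_sq_real] at this
    rw [norm_add_sq_real] at hμ ⊢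
    rw [inner_add_left, inner_add_right, inner_add_right]
    linarith [real_inner_comm u b, real_inner_comm u x]
  have hmem : -x ∈ G (-u) := hG.2 _ _ fun a b hab => by
    have : -x - b = -(b + x) := by abel
    rw [this, show -u - a = -(a + u) by abel, inner_neg_neg, real_inner_comm]
    exact (sq_nonneg _).trans (key a b hab)
  have hsum : x + u = 0 := by
    simpa using key _ _ hmem
  exact ⟨-u, by simpa only [neg_neg, neg_eq_of_add_eq_zero_right hsum] using hmem⟩

theorem comp_add_const (hG : IsMaximalMonotoneOp G) (w : H) :
    IsMaximalMonotoneOp fun x => G (x + w) := by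
  refine ⟨fun x y p q hp hq => ?_, fun x p h => hG.2 _ _ fun y q hq => ?_⟩
  · simpa using hG.1 _ _ _ _ hp hq
  · simpa [sub_sub_eq_add_sub] using h (y - w) q (by simpa using hq)

theorem const_smul (hG : IsMaximalMonotoneOp G) {l : ℝ} (hl : 0 < l) :
    IsMaximalMonotoneOp fun x => l • G x := by
  refine ⟨?_, fun x p h => ?_⟩
  · rintro x y _ _ ⟨p, hp, rfl⟩ ⟨q, hq, rfl⟩
    rw [← smul_sub, real_inner_smul_left]
    exact mul_nonneg hl.le (hG.1 _ _ _ _ hp hq)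
  · rw [← smul_inv_smul₀ hl.ne' p, Set.smul_mem_smul_set_iff₀ hl.ne']
    refine hG.2 _ _ fun y q hq => ?_
    have := h y (l • q) (Set.smul_mem_smul_set hq)
    rwa [← smul_inv_smul₀ hl.ne' p, ← smul_sub, real_inner_smul_left,
      mul_nonneg_iff_of_pos_left hl] at this

theorem exists_sub_mem_smul [CompleteSpace H] (hG : IsMaximalMonotoneOp G) {l : ℝ} (hl : 0 < l)
    (w : H) : ∃ y, w - y ∈ l • G y := by
  obtain ⟨y, hy⟩ := ((hG.comp_add_const w).const_smul hl).exists_neg_mem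
  exact ⟨y + w, by simpa using hy⟩

/-- The maximality of `F + G` at the pair `(q, 0)`. -/
theorem neg_mem_of_forall_inner_nonpos [CompleteSpace H] (hG : IsMaximalMonotoneOp G)
    {F : H → H} {L : ℝ} (hL : 0 < L) (hF : ∀ x y, ‖F x - F y‖ ≤ L * ‖x - y‖) {q : H}
    (h : ∀ z p, p ∈ G z → ⟪F z + p, q - z⟫ ≤ 0) : -F q ∈ G q := by
  -- the forward-backward step of size `(2L)⁻¹` from `q` cannot move `q`, as `F` is `L`-Lipschitz
  set l := (2 * L)⁻¹
  have hl : 0 < l := by positivity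
  have h2l : 2 * L * l = 1 := mul_inv_cancel₀ (by positivity)
  obtain ⟨y, hy⟩ := hG.exists_sub_mem_smul hl (q - l • F q)
  obtain ⟨p, hp, hyp⟩ := Set.mem_smul_set.1 hy
  have hFp : F y + p = (F y - F q) + (2 * L) • (q - y) := by
    have : p = (2 * L) • (l • p) := by rw [smul_smul, h2l, one_smul]
    rw [this, hyp, smul_sub, smul_sub, smul_smul, h2l, one_smul]
    module
  have hlip := neg_mul_le_inner_sub_of_lipschitz hF y q (q - y)
  rw [norm_sub_rev y q, ← sq] at hlip
  have hyq : q - y = 0 := by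
    have := h y p hp
    rw [hFp, inner_add_left, real_inner_smul_left, real_inner_self_eq_norm_sq] at this
    have : ‖q - y‖ ^ 2 * L ≤ 0 := by linarith
    simpa using nonpos_of_mul_nonpos_left this hL
  rw [sub_eq_zero] at hyq
  rw [← hyq, sub_sub_cancel_left, ← smul_neg] at hy
  exact (Set.smul_mem_smul_set_iff₀ hl.ne' _ _).1 hy

end IsMaximalMonotoneOp

theorem mul_inner_le_of_sub_mem_smul {F : H → H} {L γ : ℝ}
    (hFmono : ∀ x y, 0 ≤ ⟪F x - F y, x - y⟫) (hFlip : ∀ x y, ‖F x - F y‖ ≤ L * ‖x - y‖)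
    (hG : IsMonotoneOp G) (hγ : 0 ≤ γ) {w y z p : H}
    (hres : w - γ • F w - y ∈ γ • G y) (hp : p ∈ G z) :
    γ * ⟪F z + p, y - z⟫ ≤ (1 + γ * L) * (‖w - y‖ * ‖y - z‖) := by
  obtain ⟨u, hu, hγu⟩ := Set.mem_smul_set.1 hres
  have hup : 0 ≤ γ * ⟪u - p, y - z⟫ := mul_nonneg hγ (hG _ _ _ _ hu hp)
  have hsplit : γ * ⟪u - p, y - z⟫ = ⟪w - y, y - z⟫ - γ * ⟪F w - F y, y - z⟫
      - γ * ⟪F y - F z, y - z⟫ - γ * ⟪F z + p, y - z⟫ := by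
    rw [← real_inner_smul_left, smul_sub, hγu]
    simp only [inner_sub_left, inner_add_left, real_inner_smul_left]
    ring
  have hlip := mul_le_mul_of_nonneg_left (neg_mul_le_inner_sub_of_lipschitz hFlip w y (y - z)) hγ
  linarith [real_inner_le_norm (w - y) (y - z), mul_nonneg hγ (hFmono y z)]

theorem exists_norm_le_of_tendsto_inner [CompleteSpace H] {x : ℕ → H} {q : H}
    (hx : ∀ v, Tendsto (fun k => ⟪x k, v⟫) atTop (𝓝 ⟪q, v⟫)) : ∃ C, ∀ k, ‖x k‖ ≤ C := by
  obtain ⟨C, hC⟩ := banach_steinhaus (g := fun k => innerSL ℝ (x k)) fun v => by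
    obtain ⟨C, hC⟩ := (hx v).norm.bddAbove_range
    exact ⟨C, fun k => hC (mem_range_self k)⟩
  exact ⟨C, fun k => by simpa using hC k⟩

theorem tendsto_inner_of_tendsto_sub {ι : Type*} {l : Filter ι} {x y : ι → H} {q : H}
    (hx : ∀ v, Tendsto (fun k => ⟪x k, v⟫) l (𝓝 ⟪q, v⟫))
    (hxy : Tendsto (fun k => y k - x k) l (𝓝 0)) (v : H) :
    Tendsto (fun k => ⟪y k, v⟫) l (𝓝 ⟪q, v⟫) := by
  simpa [inner_sub_left] using (hx v).add (hxy.inner (tendsto_const_nhds (x := v)))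

theorem inner_add_sub_nonpos_of_tendsto [CompleteSpace H] {F : H → H} {L : ℝ}
    (hFmono : ∀ x y, 0 ≤ ⟪F x - F y, x - y⟫) (hFlip : ∀ x y, ‖F x - F y‖ ≤ L * ‖x - y‖)
    (hG : IsMonotoneOp G) {w y : ℕ → H} {γ : ℕ → ℝ} {γlim : ℝ} (hγpos : ∀ n, 0 ≤ γ n)
    (hγlim : 0 < γlim) (hγ : Tendsto γ atTop (𝓝 γlim))
    (hres : ∀ n, w n - γ n • F (w n) - y n ∈ γ n • G (y n))
    (hwy : Tendsto (fun n => ‖w n - y n‖) atTop (𝓝 0)) {q : H}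
    (hweak : ∀ v, Tendsto (fun n => ⟪y n, v⟫) atTop (𝓝 ⟪q, v⟫)) {z p : H} (hp : p ∈ G z) :
    ⟪F z + p, q - z⟫ ≤ 0 := by
  obtain ⟨C, hC⟩ := exists_norm_le_of_tendsto_inner hweak
  have hlhs : Tendsto (fun n => γ n * ⟪F z + p, y n - z⟫) atTop
      (𝓝 (γlim * ⟪F z + p, q - z⟫)) := by
    refine hγ.mul ?_
    simp_rw [← real_inner_comm (F z + p), inner_sub_left]
    exact (hweak _).sub_const _
  have hbdd : IsBoundedUnder (· ≤ ·) atTop ((‖·‖) ∘ fun n => ‖y n - z‖) :=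
    isBoundedUnder_of ⟨C + ‖z‖, fun n => by
      simpa using (norm_sub_le (y n) z).trans (add_le_add_left (hC n) _)⟩
  have hrhs : Tendsto (fun n => (1 + γ n * L) * (‖w n - y n‖ * ‖y n - z‖)) atTop
      (𝓝 ((1 + γlim * L) * 0)) :=
    (tendsto_const_nhds.add (hγ.mul_const L)).mul (hwy.zero_mul_isBoundedUnder_le hbdd)
  have := le_of_tendsto_of_tendsto' hlhs hrhs fun n =>
    mul_inner_le_of_sub_mem_smul hFmono hFlip hG (hγpos n) (hres n) hp
  rw [mul_zero] at this
  exact nonpos_of_mul_nonpos_right this hγlim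

end MonotoneOperator

/-- Lemma 3.2: any weak sequential cluster point of the iterates is a zero of `F + G`. -/
theorem lemma32 {H : Type*} [NormedAddCommGroup H] [InnerProductSpace ℝ H]
    [CompleteSpace H]
    (F : H → H) (G : H → Set H) (L : ℝ) (hL : 0 < L)
    (hFmono : ∀ x y : H, 0 ≤ ⟪F x - F y, x - y⟫)
    (hFlip : ∀ x y : H, ‖F x - F y‖ ≤ L * ‖x - y‖)
    (hGmono : ∀ x y p q : H, p ∈ G x → q ∈ G y → 0 ≤ ⟪p - q, x - y⟫)
    (hGmax : ∀ x p : H, (∀ y q : H, q ∈ G y → 0 ≤ ⟪p - q, x - y⟫) → p ∈ G x)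
    (x w y : ℕ → H) (γ : ℕ → ℝ) (hγpos : ∀ n, 0 < γ n)
    (γlim : ℝ) (hγlim : 0 < γlim) (hγ : Tendsto γ atTop (nhds γlim))
    (hres : ∀ n, w n - γ n • F (w n) - y n ∈ γ n • G (y n))
    (hwx : Tendsto (fun n => ‖w n - x n‖) atTop (nhds 0))
    (hwy : Tendsto (fun n => ‖w n - y n‖) atTop (nhds 0))
    (q : H) (φ : ℕ → ℕ) (hφ : StrictMono φ)
    (hweak : ∀ v : H, Tendsto (fun k => ⟪x (φ k), v⟫) atTop (nhds ⟪q, v⟫)) :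
    -F q ∈ G q := by
  have hφtop := hφ.tendsto_atTop
  have hyx : Tendsto (fun n => y n - x n) atTop (𝓝 0) := by
    simpa using (tendsto_zero_iff_norm_tendsto_zero.2 hwx).sub
      (tendsto_zero_iff_norm_tendsto_zero.2 hwy)
  have hweak_y := tendsto_inner_of_tendsto_sub hweak (hyx.comp hφtop)
  have hG : IsMaximalMonotoneOp G := ⟨hGmono, hGmax⟩
  exact hG.neg_mem_of_forall_inner_nonpos hL hFlip fun z p hp =>
    inner_add_sub_nonpos_of_tendsto hFmono hFlip hGmono (fun _ => (hγpos _).le) hγlim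
      (hγ.comp hφtop) (fun _ => hres _) (hwy.comp hφtop) hweak_y hp
end

section
/- (Theorem 3.2: strong convergence of the Inertial Shrinking Projection Algorithm.) Let H be a real Hilbert space, let F : H → H be monotone and L-Lipschitz continuous with L > 0, let G : H → Set H be maximal monotone, and assume Ω := {x ∈ H : 0 ∈ Fx + Gx} is nonempty. Fix μ ∈ (0,1), γ₀ > 0, a sequence (α_n) in [0,1), x_{−1} = x₀ ∈ H, and C₀ = H. Suppose sequences (x_n)_{n≥0}, (w_n), (y_n), (z_n) in H, sets (C_n), and positive reals (γ_n) satisfy, for all n ≥ 0: w_n = x_n + α_n(x_n − x_{n−1}); w_n − γ_n F w_n − y_n ∈ γ_n • G y_n; z_n = y_n − γ_n(F y_n − F w_n); γ_{n+1} = min{ μ‖w_n − y_n‖/‖Fw_n − Fy_n‖ , γ_n } if Fw_n ≠ Fy_n and γ_{n+1} = γ_n otherwise; C_{n+1} = {u ∈ C_n : ‖z_n − u‖² ≤ ‖w_n − u‖² − (1 − μ²γ_n²/γ_{n+1}²)‖w_n − y_n‖²}; and x_{n+1} is the metric projection of x₀ onto C_{n+1}. Then (x_n) converges strongly (in norm)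 to the metric projection q* of x₀ onto Ω. -/
/-!
Each `C n` is an intersection of half-spaces, and Tseng's estimate
`‖z n - u‖² ≤ ‖w n - u‖² - (1 - μ² γₙ² / γₙ₊₁²) ‖w n - y n‖²` for every zero `u` of `F + G`
shows that all of them contain `Ω`. Projecting the fixed anchor `x 0` onto nested convex sets
gives `‖x m - x n‖² ≤ ‖x 0 - x m‖² - ‖x 0 - x n‖²` for `n ≤ m`, and these distances increase and
stay below `‖x 0 - u‖`, so `x` is Cauchy. The step sizes decrease to a positive limit, so the
coefficient tends to `1 - μ² > 0`, and `x (n + 1) ∈ C (n + 1)` then forces `w n - y n → 0`.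
The graph of a maximal monotone operator is sequentially closed, so the limit is a zero. As
`Ω ⊆ C n` and `x n` is the point of `C n` nearest to `x 0`, it is the projection of `x 0` onto `Ω`.
-/

open RealInnerProductSpace Pointwise Filter Classical Topology

section InnerProductSpace

variable {H : Type*} [NormedAddCommGroup H] [InnerProductSpace ℝ H]

theorem convex_setOf_norm_sub_sq_le (z w : H) (K : ℝ) :
    Convex ℝ {u : H | ‖z - u‖ ^ 2 ≤ ‖w - u‖ ^ 2 - K} := by
  have hhalf : {u : H | ‖z - u‖ ^ 2 ≤ ‖w - u‖ ^ 2 - K} =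
      {u : H | ⟪w - z, u⟫ ≤ (‖w‖ ^ 2 - ‖z‖ ^ 2 - K) / 2} := by
    ext u
    simp only [Set.mem_ofPred_eq, norm_sub_sq_real, inner_sub_left]
    constructor <;> intro h <;> linarith
  rw [hhalf]
  exact convex_halfSpace_le (innerₛₗ ℝ (w - z)).isLinear _

theorem sq_norm_sub_add_sq_norm_sub_le {K : Set H} (hK : Convex ℝ K) {a p v : H} (hp : p ∈ K)
    (hmin : ∀ v ∈ K, ‖a - p‖ ≤ ‖a - v‖) (hv : v ∈ K) :
    ‖v - p‖ ^ 2 + ‖a - p‖ ^ 2 ≤ ‖a - v‖ ^ 2 := by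
  have : Nonempty K := ⟨⟨p, hp⟩⟩
  have hinf : ‖a - p‖ = ⨅ v : K, ‖a - v‖ :=
    le_antisymm (le_ciInf fun v => hmin v v.2)
      (ciInf_le (f := fun v : K => ‖a - v‖) ⟨0, by rintro _ ⟨v, rfl⟩; exact norm_nonneg _⟩ ⟨p, hp⟩)
  have hvi := (norm_eq_iInf_iff_real_inner_le_zero hK hp).1 hinf v hv
  rw [show a - v = (a - p) - (v - p) by abel, norm_sub_sq_real (a - p)]
  linarith

theorem cauchySeq_of_forall_norm_le_of_antitone {C : ℕ → Set H} (hanti : Antitone C)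
    (hconv : ∀ n, Convex ℝ (C n)) {a u : H} {x : ℕ → H}
    (hx : ∀ n, x n ∈ C n ∧ ∀ v ∈ C n, ‖a - x n‖ ≤ ‖a - v‖) (hu : ∀ n, u ∈ C n) :
    CauchySeq x := by
  set D : ℕ → ℝ := fun n => ‖a - x n‖ ^ 2
  have hgap : ∀ n m, n ≤ m → ‖x m - x n‖ ^ 2 + D n ≤ D m := fun n m h =>
    sq_norm_sub_add_sq_norm_sub_le (hconv n) (hx n).1 (hx n).2 (hanti h (hx m).1)
  have hDmono : Monotone D := fun n m h => by linarith [hgap n m h, sq_nonneg ‖x m - x n‖]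
  have hDbdd : BddAbove (Set.range D) := ⟨‖a - u‖ ^ 2, by
    rintro _ ⟨n, rfl⟩
    exact pow_le_pow_left₀ (norm_nonneg _) ((hx n).2 u (hu n)) 2⟩
  refine cauchySeq_of_le_tendsto_0' (fun n => √((⨆ k, D k) - D n)) (fun n m h => ?_) ?_
  · rw [dist_comm, dist_eq_norm]
    exact (le_abs_self _).trans
      (Real.abs_le_sqrt (by linarith [hgap n m h, le_ciSup hDbdd m]))
  · simpa using ((tendsto_const_nhds (x := ⨆ k, D k)).sub
      (tendsto_atTop_ciSup hDmono hDbdd)).sqrt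

theorem inv_smul_sub_sub_mem_of_resolvent {F : H → H} {G : H → Set H} {w y : H} {γ : ℝ}
    (hγ : γ ≠ 0) (h : w - γ • F w - y ∈ γ • G y) : γ⁻¹ • (w - y) - F w ∈ G y := by
  rwa [Set.mem_smul_set_iff_inv_smul_mem₀ hγ, sub_right_comm, smul_sub, inv_smul_smul₀ hγ] at h

theorem sq_norm_tseng_sub_le {F : H → H} {G : H → Set H}
    (hFmono : ∀ x y : H, 0 ≤ ⟪F x - F y, x - y⟫)
    (hGmono : ∀ x y p q : H, p ∈ G x → q ∈ G y → 0 ≤ ⟪p - q, x - y⟫)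
    {w y u : H} {γ : ℝ} (hγ : 0 < γ) (hy : γ⁻¹ • (w - y) - F w ∈ G y) (hu : -F u ∈ G u) :
    ‖y - γ • (F y - F w) - u‖ ^ 2 ≤ ‖w - u‖ ^ 2 - ‖w - y‖ ^ 2 + γ ^ 2 * ‖F y - F w‖ ^ 2 := by
  have hsplit : w - y + γ • (F y - F w) =
      γ • ((γ⁻¹ • (w - y) - F w) - -F u) + γ • (F y - F u) := by
    simp only [smul_sub, smul_neg, smul_inv_smul₀ hγ.ne']
    abel
  have hinner : 0 ≤ ⟪w - y + γ • (F y - F w), y - u⟫ := by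
    rw [hsplit, inner_add_left, real_inner_smul_left, real_inner_smul_left]
    exact add_nonneg (mul_nonneg hγ.le (hGmono _ _ _ _ hy hu)) (mul_nonneg hγ.le (hFmono y u))
  have hid : ‖y - γ • (F y - F w) - u‖ ^ 2 = ‖w - u‖ ^ 2 - ‖w - y‖ ^ 2
      + γ ^ 2 * ‖F y - F w‖ ^ 2 - 2 * ⟪w - y + γ • (F y - F w), y - u⟫ := by
    simp only [← real_inner_self_eq_norm_sq, inner_sub_left, inner_sub_right, inner_add_left,
      real_inner_smul_right, real_inner_comm]
    ring
  linarith

theorem sq_norm_tseng_sub_le_of_stepsize {F : H → H} {G : H → Set H}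
    (hFmono : ∀ x y : H, 0 ≤ ⟪F x - F y, x - y⟫)
    (hGmono : ∀ x y p q : H, p ∈ G x → q ∈ G y → 0 ≤ ⟪p - q, x - y⟫)
    {w y u : H} {γ γ' μ : ℝ} (hγ : 0 < γ) (hy : γ⁻¹ • (w - y) - F w ∈ G y) (hu : -F u ∈ G u)
    (hγ' : 0 < γ') (hstep : γ' * ‖F w - F y‖ ≤ μ * ‖w - y‖) :
    ‖y - γ • (F y - F w) - u‖ ^ 2 ≤
      ‖w - u‖ ^ 2 - (1 - μ ^ 2 * γ ^ 2 / γ' ^ 2) * ‖w - y‖ ^ 2 := by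
  have hF : γ ^ 2 * ‖F y - F w‖ ^ 2 ≤ μ ^ 2 * γ ^ 2 / γ' ^ 2 * ‖w - y‖ ^ 2 :=
    calc γ ^ 2 * ‖F y - F w‖ ^ 2 = (γ / γ') ^ 2 * (γ' * ‖F w - F y‖) ^ 2 := by
          rw [norm_sub_rev]; field_simp
      _ ≤ (γ / γ') ^ 2 * (μ * ‖w - y‖) ^ 2 := by gcongr
      _ = μ ^ 2 * γ ^ 2 / γ' ^ 2 * ‖w - y‖ ^ 2 := by ring
  linarith [sq_norm_tseng_sub_le hFmono hGmono hγ hy hu]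

theorem mem_of_tendsto_of_maximal_monotone {G : H → Set H}
    (hGmono : ∀ x y p q : H, p ∈ G x → q ∈ G y → 0 ≤ ⟪p - q, x - y⟫)
    (hGmax : ∀ x p : H, (∀ y q : H, q ∈ G y → 0 ≤ ⟪p - q, x - y⟫) → p ∈ G x)
    {ι : Type*} {l : Filter ι} [l.NeBot] {y v : ι → H} {a b : H}
    (hy : Tendsto y l (𝓝 a)) (hv : Tendsto v l (𝓝 b)) (hmem : ∀ i, v i ∈ G (y i)) :
    b ∈ G a :=
  hGmax a b fun z q hq =>
    ge_of_tendsto' ((hv.sub_const q).inner (hy.sub_const z)) fun i => hGmono _ _ _ _ (hmem i) hq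

end InnerProductSpace

section Stepsize

variable {E : Type*} [NormedAddCommGroup E] {μ γ γ' d : ℝ} {p q : E}

theorem stepsize_le (h : γ' = if p ≠ q then min (μ * d / ‖p - q‖) γ else γ) : γ' ≤ γ := by
  rw [h]
  split_ifs
  exacts [min_le_right _ _, le_rfl]

theorem stepsize_mul_norm_le (hμd : 0 ≤ μ * d)
    (h : γ' = if p ≠ q then min (μ * d / ‖p - q‖) γ else γ) : γ' * ‖p - q‖ ≤ μ * d := by
  rw [h]
  split_ifs with hpq
  · have hpos : 0 < ‖p - q‖ := norm_pos_iff.2 (sub_ne_zero.2 hpq)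
    calc min (μ * d / ‖p - q‖) γ * ‖p - q‖ ≤ μ * d / ‖p - q‖ * ‖p - q‖ := by
          gcongr; exact min_le_left _ _
      _ = μ * d := div_mul_cancel₀ _ hpos.ne'
  · rw [not_not.1 hpq, sub_self, norm_zero, mul_zero]
    exact hμd

theorem le_stepsize {c L : ℝ} (hL : 0 < L) (hμ : 0 ≤ μ) (hpq : ‖p - q‖ ≤ L * d)
    (hcγ : c ≤ γ) (hcL : c ≤ μ / L)
    (h : γ' = if p ≠ q then min (μ * d / ‖p - q‖) γ else γ) : c ≤ γ' := by
  rw [h]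
  split_ifs with hne
  · have hpos : 0 < ‖p - q‖ := norm_pos_iff.2 (sub_ne_zero.2 hne)
    refine le_min (hcL.trans ?_) hcγ
    rw [div_le_div_iff₀ hL hpos]
    nlinarith
  · exact hcγ

theorem exists_pos_tendsto_stepsize {L : ℝ} (hL : 0 < L) (hμ : 0 < μ) {γ d : ℕ → ℝ}
    {p q : ℕ → E} (hγ0 : 0 < γ 0) (hpq : ∀ n, ‖p n - q n‖ ≤ L * d n)
    (hrec : ∀ n, γ (n + 1) = if p n ≠ q n then min (μ * d n / ‖p n - q n‖) (γ n) else γ n) :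
    ∃ g > 0, Tendsto γ atTop (𝓝 g) := by
  have hlb : ∀ n, min (γ 0) (μ / L) ≤ γ n := by
    intro n
    induction n with
    | zero => exact min_le_left _ _
    | succ n ih => exact le_stepsize hL hμ.le (hpq n) ih (min_le_right _ _) (hrec n)
  exact ⟨⨅ n, γ n, (lt_min hγ0 (div_pos hμ hL)).trans_le (le_ciInf hlb),
    tendsto_atTop_ciInf (antitone_nat_of_succ_le fun n => stepsize_le (hrec n))
      ⟨_, Set.forall_mem_range.2 hlb⟩⟩

theorem tendsto_one_sub_sq_mul_sq_div_sq_succ {γ : ℕ → ℝ} {g : ℝ} (hg : g ≠ 0)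
    (hγ : Tendsto γ atTop (𝓝 g)) (μ : ℝ) :
    Tendsto (fun n => 1 - μ ^ 2 * γ n ^ 2 / γ (n + 1) ^ 2) atTop (𝓝 (1 - μ ^ 2)) := by
  have hlim : Tendsto (fun n => μ ^ 2 * γ n ^ 2 / γ (n + 1) ^ 2) atTop
      (𝓝 (μ ^ 2 * g ^ 2 / g ^ 2)) :=
    (tendsto_const_nhds.mul (hγ.pow 2)).div (((tendsto_add_atTop_iff_nat 1).2 hγ).pow 2)
      (pow_ne_zero 2 hg)
  rw [mul_div_assoc, div_self (pow_ne_zero 2 hg), mul_one] at hlim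
  exact tendsto_const_nhds.sub hlim

end Stepsize

theorem tendsto_zero_of_mul_sq_norm_le {E E' : Type*} [SeminormedAddCommGroup E]
    [SeminormedAddCommGroup E'] {u : ℕ → E} {v : ℕ → E'} {k : ℕ → ℝ} {κ : ℝ} (hκ : 0 < κ)
    (hk : Tendsto k atTop (𝓝 κ)) (hu : Tendsto u atTop (𝓝 0))
    (h : ∀ n, k n * ‖v n‖ ^ 2 ≤ ‖u n‖ ^ 2) : Tendsto v atTop (𝓝 0) := by
  refine squeeze_zero_norm' ?_
    (by simpa only [norm_zero, mul_zero] using hu.norm.const_mul √(2 / κ))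
  filter_upwards [hk.eventually (eventually_ge_nhds (half_lt_self hκ))] with n hn
  have hsq : ‖v n‖ ^ 2 ≤ 2 / κ * ‖u n‖ ^ 2 := by
    rw [div_mul_eq_mul_div, le_div_iff₀ hκ]
    nlinarith [h n, sq_nonneg ‖v n‖]
  calc ‖v n‖ = √(‖v n‖ ^ 2) := (Real.sqrt_sq (norm_nonneg _)).symm
    _ ≤ √(2 / κ * ‖u n‖ ^ 2) := Real.sqrt_le_sqrt hsq
    _ = √(2 / κ) * ‖u n‖ := by rw [Real.sqrt_mul (by positivity), Real.sqrt_sq (norm_nonneg _)]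

theorem tendsto_of_inertial {E : Type*} [NormedAddCommGroup E] [NormedSpace ℝ E] {x w : ℕ → E}
    {α : ℕ → ℝ} {p : E} {M : ℝ} (hx : Tendsto x atTop (𝓝 p)) (hα : ∀ n, |α n| ≤ M)
    (hw : ∀ n, w (n + 1) = x (n + 1) + α (n + 1) • (x (n + 1) - x n)) :
    Tendsto w atTop (𝓝 p) := by
  have hx1 := (tendsto_add_atTop_iff_nat 1).2 hx
  have hmom : Tendsto (fun n => α (n + 1) • (x (n + 1) - x n)) atTop (𝓝 0) :=
    (isBoundedUnder_of ⟨M, fun n => hα (n + 1)⟩).smul_tendsto_zero (by simpa using hx1.sub hx)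
  rw [← tendsto_add_atTop_iff_nat 1]
  simpa [hw] using hx1.add hmom

theorem thm32_ISPA_general {H : Type*} [NormedAddCommGroup H] [InnerProductSpace ℝ H]
    [CompleteSpace H]
    (F : H → H) (G : H → Set H) (L : ℝ) (hL : 0 < L)
    (hFmono : ∀ x y : H, 0 ≤ ⟪F x - F y, x - y⟫)
    (hFlip : ∀ x y : H, ‖F x - F y‖ ≤ L * ‖x - y‖)
    (hGmono : ∀ x y p q : H, p ∈ G x → q ∈ G y → 0 ≤ ⟪p - q, x - y⟫)
    (hGmax : ∀ x p : H, (∀ y q : H, q ∈ G y → 0 ≤ ⟪p - q, x - y⟫) → p ∈ G x)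
    (Ω : Set H) (hΩ : Ω = {x : H | -F x ∈ G x}) (hΩne : Ω.Nonempty)
    (μ : ℝ) (hμ : μ ∈ Set.Ioo (0 : ℝ) 1)
    (α : ℕ → ℝ) (hα : ∀ n, α n ∈ Set.Ico (0 : ℝ) 1)
    (x w y z : ℕ → H) (γ : ℕ → ℝ) (hγpos : ∀ n, 0 < γ n)
    (C : ℕ → Set H) (hC0 : C 0 = Set.univ)
    (hw : ∀ n, w (n + 1) = x (n + 1) + α (n + 1) • (x (n + 1) - x n))
    (hres : ∀ n, w n - γ n • F (w n) - y n ∈ γ n • G (y n))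
    (hz : ∀ n, z n = y n - γ n • (F (y n) - F (w n)))
    (hγrec : ∀ n, γ (n + 1) =
      if F (w n) ≠ F (y n)
      then min (μ * ‖w n - y n‖ / ‖F (w n) - F (y n)‖) (γ n)
      else γ n)
    (hC : ∀ n, C (n + 1) = {u : H | u ∈ C n ∧ ‖z n - u‖ ^ 2 ≤
      ‖w n - u‖ ^ 2 - (1 - μ ^ 2 * γ n ^ 2 / γ (n + 1) ^ 2) * ‖w n - y n‖ ^ 2})
    (hproj : ∀ n, x (n + 1) ∈ C (n + 1) ∧
      ∀ v ∈ C (n + 1), ‖x 0 - x (n + 1)‖ ≤ ‖x 0 - v‖) :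
    ∃ q : H, (q ∈ Ω ∧ ∀ v ∈ Ω, ‖x 0 - q‖ ≤ ‖x 0 - v‖) ∧
      Tendsto x atTop (nhds q) := by
  subst hΩ
  obtain ⟨u₀, hu₀⟩ := hΩne
  obtain ⟨hμ0, hμ1⟩ := hμ
  have hGy n : (γ n)⁻¹ • (w n - y n) - F (w n) ∈ G (y n) :=
    inv_smul_sub_sub_mem_of_resolvent (hγpos n).ne' (hres n)
  have hΩC n : {u | -F u ∈ G u} ⊆ C n := by
    induction n with
    | zero => exact hC0 ▸ Set.subset_univ _
    | succ n ih =>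
      intro u hu
      rw [hC n, hz n]
      exact ⟨ih hu, sq_norm_tseng_sub_le_of_stepsize hFmono hGmono (hγpos n) (hGy n)
        hu (hγpos (n + 1)) (stepsize_mul_norm_le (by positivity) (hγrec n))⟩
  have hCanti : Antitone C := antitone_nat_of_succ_le fun n u hu => (hC n ▸ hu).1
  have hCconv n : Convex ℝ (C n) := by
    induction n with
    | zero => exact hC0 ▸ convex_univ
    | succ n ih => exact hC n ▸ ih.inter (convex_setOf_norm_sub_sq_le _ _ _)
  have hxC : ∀ n, x n ∈ C n ∧ ∀ v ∈ C n, ‖x 0 - x n‖ ≤ ‖x 0 - v‖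
    | 0 => ⟨hC0 ▸ Set.mem_univ _, fun v _ => by simp⟩
    | n + 1 => hproj n
  obtain ⟨p, hxp⟩ := cauchySeq_tendsto_of_complete
    (cauchySeq_of_forall_norm_le_of_antitone hCanti hCconv hxC fun n => hΩC n hu₀)
  have hwp : Tendsto w atTop (𝓝 p) :=
    tendsto_of_inertial hxp (fun n => abs_le.2 ⟨by linarith [(hα n).1], (hα n).2.le⟩) hw
  obtain ⟨g, hg, hγg⟩ :=
    exists_pos_tendsto_stepsize hL hμ0 (hγpos 0) (fun n => hFlip (w n) (y n)) hγrec
  have hwy : Tendsto (fun n => w n - y n) atTop (𝓝 0) := by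
    refine tendsto_zero_of_mul_sq_norm_le (by nlinarith) (tendsto_one_sub_sq_mul_sq_div_sq_succ
      hg.ne' hγg μ) (by simpa using hwp.sub ((tendsto_add_atTop_iff_nat 1).2 hxp)) fun n => ?_
    linarith [(hC n ▸ (hproj n).1).2, sq_nonneg ‖z n - x (n + 1)‖]
  have hFcont : Continuous F := (LipschitzWith.of_dist_le_mul (K := L.toNNReal) fun a b => by
    simpa [dist_eq_norm, hL.le] using hFlip a b).continuous
  have hpΩ : -F p ∈ G p := mem_of_tendsto_of_maximal_monotone hGmono hGmax
    (by simpa using hwp.sub hwy)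
    (by simpa using ((hγg.inv₀ hg.ne').smul hwy).sub ((hFcont.tendsto p).comp hwp)) hGy
  exact ⟨p, ⟨hpΩ, fun v hv => le_of_tendsto' (tendsto_const_nhds.sub hxp).norm
    fun n => (hxC n).2 v (hΩC n hv)⟩, hxp⟩

/-- Theorem 3.2: strong convergence of the Inertial Shrinking Projection Algorithm. -/
theorem thm32_ISPA {H : Type*} [NormedAddCommGroup H] [InnerProductSpace ℝ H]
    [CompleteSpace H]
    (F : H → H) (G : H → Set H) (L : ℝ) (hL : 0 < L)
    (hFmono : ∀ x y : H, 0 ≤ ⟪F x - F y, x - y⟫)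
    (hFlip : ∀ x y : H, ‖F x - F y‖ ≤ L * ‖x - y‖)
    (hGmono : ∀ x y p q : H, p ∈ G x → q ∈ G y → 0 ≤ ⟪p - q, x - y⟫)
    (hGmax : ∀ x p : H, (∀ y q : H, q ∈ G y → 0 ≤ ⟪p - q, x - y⟫) → p ∈ G x)
    (Ω : Set H) (hΩ : Ω = {x : H | -F x ∈ G x}) (hΩne : Ω.Nonempty)
    (μ : ℝ) (hμ : μ ∈ Set.Ioo (0 : ℝ) 1)
    (α : ℕ → ℝ) (hα : ∀ n, α n ∈ Set.Ico (0 : ℝ) 1)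
    (x w y z : ℕ → H) (γ : ℕ → ℝ) (hγpos : ∀ n, 0 < γ n)
    (C : ℕ → Set H) (hC0 : C 0 = Set.univ)
    (hw0 : w 0 = x 0)
    (hw : ∀ n, w (n + 1) = x (n + 1) + α (n + 1) • (x (n + 1) - x n))
    (hres : ∀ n, w n - γ n • F (w n) - y n ∈ γ n • G (y n))
    (hz : ∀ n, z n = y n - γ n • (F (y n) - F (w n)))
    (hγrec : ∀ n, γ (n + 1) =
      if F (w n) ≠ F (y n)
      then min (μ * ‖w n - y n‖ / ‖F (w n) - F (y n)‖) (γ n)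
      else γ n)
    (hC : ∀ n, C (n + 1) = {u : H | u ∈ C n ∧ ‖z n - u‖ ^ 2 ≤
      ‖w n - u‖ ^ 2 - (1 - μ ^ 2 * γ n ^ 2 / γ (n + 1) ^ 2) * ‖w n - y n‖ ^ 2})
    (hproj : ∀ n, x (n + 1) ∈ C (n + 1) ∧
      ∀ v ∈ C (n + 1), ‖x 0 - x (n + 1)‖ ≤ ‖x 0 - v‖) :
    ∃ q : H, (q ∈ Ω ∧ ∀ v ∈ Ω, ‖x 0 - q‖ ≤ ‖x 0 - v‖) ∧
      Tendsto x atTop (nhds q) :=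
  thm32_ISPA_general F G L hL hFmono hFlip hGmono hGmax Ω hΩ hΩne μ hμ α hα x w y z γ hγpos C hC0 hw
    hres hz hγrec hC hproj
end

section
/- (Step 1 of the proof of Theorem 3.1.) In the setting of the Inertial Hybrid Projection Algorithm — H a real Hilbert space, F : H → H monotone and L-Lipschitz, G : H → Set H maximal monotone, Ω := {x : 0 ∈ Fx + Gx} nonempty, μ ∈ (0,1), γ₀ > 0, (α_n) ⊂ [0,1), x_{−1} = x₀, and for all n ≥ 0: w_n = x_n + α_n(x_n − x_{n−1}), w_n − γ_n F w_n − y_n ∈ γ_n • G y_n, z_n = y_n − γ_n(F y_n − F w_n), γ_{n+1} = min{μ‖w_n − y_n‖/‖Fw_n − Fy_n‖, γ_n} if Fw_n ≠ Fy_n and γ_{n+1} = γ_n otherwise, C_n = {u ∈ H : ‖z_n − u‖² ≤ ‖w_n − u‖² − (1 − μ²γ_n²/γ_{n+1}²)‖w_n − y_n‖²}, Q_n = {u ∈ H : ⟨x_n − u, x_n − x₀⟩ ≤ 0}, and x_{n+1} the metric projection of x₀ onto C_n ∩ Q_n — one has Ω ⊆ C_n ∩ Q_n for every n ≥ 0.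 -/
open RealInnerProductSpace Pointwise Filter Classical

/-! A solution `u` of `0 ∈ Fu + Gu` satisfies, by monotonicity of `F` and `G` applied to the
resolvent step, `0 ≤ ⟪(w - y) - γ (Fw - Fy), y - u⟫`; expanding `‖z - u‖²` around `y` and
bounding `γ ‖Fw - Fy‖ ≤ μ (γ / γ') ‖w - y‖` by the step-size rule puts `u` in `Cₙ`. Both `Cₙ` and
`Qₙ` are half-spaces, so `Cₙ ∩ Qₙ` is convex, and the variational characterisation of the
projection `xₙ₊₁` of `x₀` onto it says exactly that `Cₙ ∩ Qₙ ⊆ Qₙ₊₁`; induction on `n` does the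
rest. -/

lemma ite_min_mul_norm_sub_le {E : Type*} [NormedAddCommGroup E] {μ r : ℝ} (hμ : 0 ≤ μ)
    (hr : 0 ≤ r) (γ : ℝ) (p q : E) :
    (if p ≠ q then min (μ * r / ‖p - q‖) γ else γ) * ‖p - q‖ ≤ μ * r := by
  split_ifs with hpq
  · have hd : 0 < ‖p - q‖ := norm_pos_iff.mpr (sub_ne_zero.mpr hpq)
    calc min (μ * r / ‖p - q‖) γ * ‖p - q‖ ≤ μ * r / ‖p - q‖ * ‖p - q‖ :=
          mul_le_mul_of_nonneg_right (min_le_left _ _) hd.le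
      _ = μ * r := div_mul_cancel₀ _ hd.ne'
  · rw [not_not.mp hpq, sub_self, norm_zero, mul_zero]
    positivity

section InnerProductSpace

variable {H : Type*} [NormedAddCommGroup H] [InnerProductSpace ℝ H]

lemma norm_add_sq_le_of_inner_sub_nonneg {a b c : H} (h : 0 ≤ ⟪a - c, b⟫) :
    ‖b + c‖ ^ 2 ≤ ‖a + b‖ ^ 2 - ‖a‖ ^ 2 + ‖c‖ ^ 2 := by
  rw [norm_add_sq_real, norm_add_sq_real, inner_sub_left, real_inner_comm c b] at *
  linarith

lemma convex_setOf_norm_sub_sq_le_norm_sub_sq_sub (z w : H) (r : ℝ) :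
    Convex ℝ {u : H | ‖z - u‖ ^ 2 ≤ ‖w - u‖ ^ 2 - r} := by
  have hset : {u : H | ‖z - u‖ ^ 2 ≤ ‖w - u‖ ^ 2 - r} =
      {u | (innerₛₗ ℝ ((2 : ℝ) • (w - z))) u ≤ ‖w‖ ^ 2 - ‖z‖ ^ 2 - r} := by
    ext u
    simp only [Set.mem_ofPred_eq, innerₛₗ_apply_apply, norm_sub_sq_real,
      real_inner_smul_left, inner_sub_left]
    constructor <;> intro h <;> linarith
  rw [hset]
  exact convex_halfSpace_le (innerₛₗ ℝ _).isLinear _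

lemma convex_setOf_inner_sub_le_zero (x d : H) :
    Convex ℝ {u : H | ⟪x - u, d⟫ ≤ 0} := by
  have hset : {u : H | ⟪x - u, d⟫ ≤ 0} = {u | ⟪x, d⟫ ≤ (innerₛₗ ℝ d) u} := by
    ext u
    simp only [Set.mem_ofPred_eq, innerₛₗ_apply_apply, inner_sub_left, real_inner_comm d u]
    constructor <;> intro h <;> linarith
  rw [hset]
  exact convex_halfSpace_ge (innerₛₗ ℝ d).isLinear _

lemma inner_sub_sub_nonpos_of_forall_norm_sub_le {S : Set H} (hS : Convex ℝ S) {x₀ p : H}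
    (hp : p ∈ S) (hmin : ∀ v ∈ S, ‖x₀ - p‖ ≤ ‖x₀ - v‖) {v : H} (hv : v ∈ S) :
    ⟪p - v, p - x₀⟫ ≤ 0 := by
  have hinf : ‖x₀ - p‖ = ⨅ s : S, ‖x₀ - (s : H)‖ := by
    have : Nonempty S := ⟨⟨p, hp⟩⟩
    have hbdd : BddBelow (Set.range fun s : S => ‖x₀ - (s : H)‖) :=
      ⟨0, by rintro _ ⟨s, rfl⟩; exact norm_nonneg _⟩
    exact le_antisymm (le_ciInf fun s => hmin s s.2) (ciInf_le hbdd ⟨p, hp⟩)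
  rw [← neg_sub v p, ← neg_sub x₀ p, inner_neg_neg, real_inner_comm]
  exact (norm_eq_iInf_iff_real_inner_le_zero hS hp).mp hinf v hv

lemma norm_sub_sq_le_of_mem_resolvent {F : H → H} {G : H → Set H}
    (hFmono : ∀ x y : H, 0 ≤ ⟪F x - F y, x - y⟫)
    (hGmono : ∀ x y p q : H, p ∈ G x → q ∈ G y → 0 ≤ ⟪p - q, x - y⟫)
    {u w y : H} {γ γ' μ : ℝ} (hγ : 0 < γ) (hγ' : 0 < γ') (hu : -F u ∈ G u)
    (hres : w - γ • F w - y ∈ γ • G y) (hstep : γ' * ‖F w - F y‖ ≤ μ * ‖w - y‖) :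
    ‖y - γ • (F y - F w) - u‖ ^ 2 ≤
      ‖w - u‖ ^ 2 - (1 - μ ^ 2 * γ ^ 2 / γ' ^ 2) * ‖w - y‖ ^ 2 := by
  obtain ⟨g, hg, hγg⟩ := Set.mem_smul_set.mp hres
  have hinner : 0 ≤ ⟪(w - y) - γ • (F w - F y), y - u⟫ := by
    have hsplit : (w - y) - γ • (F w - F y) = γ • ((g - -F u) + (F y - F u)) := by
      simp only [smul_add, smul_sub, hγg]
      module
    rw [hsplit, real_inner_smul_left, inner_add_left]
    exact mul_nonneg hγ.le (add_nonneg (hGmono _ _ _ _ hg hu) (hFmono _ _))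
  have hcorr : ‖γ • (F w - F y)‖ ^ 2 ≤ μ ^ 2 * γ ^ 2 / γ' ^ 2 * ‖w - y‖ ^ 2 := by
    have hsq : (γ' * ‖F w - F y‖) ^ 2 ≤ (μ * ‖w - y‖) ^ 2 :=
      pow_le_pow_left₀ (by positivity) hstep 2
    rw [norm_smul, Real.norm_eq_abs, abs_of_pos hγ, div_mul_eq_mul_div,
      le_div_iff₀ (by positivity)]
    nlinarith [sq_nonneg γ]
  have hexpand := norm_add_sq_le_of_inner_sub_nonneg hinner
  rw [sub_add_sub_cancel] at hexpand
  have hzu : y - γ • (F y - F w) - u = y - u + γ • (F w - F y) := by module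
  rw [hzu]
  linarith

end InnerProductSpace

theorem thm31_step1_general {H : Type*} [NormedAddCommGroup H] [InnerProductSpace ℝ H]
    (F : H → H) (G : H → Set H)
    (hFmono : ∀ x y : H, 0 ≤ ⟪F x - F y, x - y⟫)
    (hGmono : ∀ x y p q : H, p ∈ G x → q ∈ G y → 0 ≤ ⟪p - q, x - y⟫)
    (Ω : Set H) (hΩ : Ω = {x : H | -F x ∈ G x})
    (μ : ℝ) (hμ : μ ∈ Set.Ioo (0 : ℝ) 1)
    (x w y z : ℕ → H) (γ : ℕ → ℝ) (hγpos : ∀ n, 0 < γ n)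
    (C Q : ℕ → Set H)
    (hres : ∀ n, w n - γ n • F (w n) - y n ∈ γ n • G (y n))
    (hz : ∀ n, z n = y n - γ n • (F (y n) - F (w n)))
    (hγrec : ∀ n, γ (n + 1) =
      if F (w n) ≠ F (y n)
      then min (μ * ‖w n - y n‖ / ‖F (w n) - F (y n)‖) (γ n)
      else γ n)
    (hC : ∀ n, C n = {u : H | ‖z n - u‖ ^ 2 ≤
      ‖w n - u‖ ^ 2 - (1 - μ ^ 2 * γ n ^ 2 / γ (n + 1) ^ 2) * ‖w n - y n‖ ^ 2})
    (hQ : ∀ n, Q n = {u : H | ⟪x n - u, x n - x 0⟫ ≤ 0})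
    (hproj : ∀ n, x (n + 1) ∈ C n ∩ Q n ∧
      ∀ v ∈ C n ∩ Q n, ‖x 0 - x (n + 1)‖ ≤ ‖x 0 - v‖) :
    ∀ n, Ω ⊆ C n ∩ Q n := by
  subst hΩ
  have hzeros_sub_C : ∀ n, {x : H | -F x ∈ G x} ⊆ C n := fun n u hu => by
    rw [hC n, hz n]
    refine norm_sub_sq_le_of_mem_resolvent hFmono hGmono (hγpos n) (hγpos (n + 1))
      hu (hres n) ?_
    rw [hγrec n]
    exact ite_min_mul_norm_sub_le hμ.1.le (norm_nonneg _) _ _ _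
  have hconv : ∀ n, Convex ℝ (C n ∩ Q n) := fun n => by
    rw [hC n, hQ n]
    exact (convex_setOf_norm_sub_sq_le_norm_sub_sq_sub _ _ _).inter
      (convex_setOf_inner_sub_le_zero _ _)
  intro n
  induction n with
  | zero => exact fun u hu => ⟨hzeros_sub_C 0 hu, by simp [hQ]⟩
  | succ n ih =>
    refine fun u hu => ⟨hzeros_sub_C (n + 1) hu, ?_⟩
    rw [hQ (n + 1)]
    exact inner_sub_sub_nonpos_of_forall_norm_sub_le (hconv n) (hproj n).1 (hproj n).2 (ih hu)

/-- Step 1 of the proof of Theorem 3.1: `Ω ⊆ Cₙ ∩ Qₙ` for every `n`. -/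
theorem thm31_step1 {H : Type*} [NormedAddCommGroup H] [InnerProductSpace ℝ H]
    [CompleteSpace H]
    (F : H → H) (G : H → Set H) (L : ℝ) (hL : 0 < L)
    (hFmono : ∀ x y : H, 0 ≤ ⟪F x - F y, x - y⟫)
    (hFlip : ∀ x y : H, ‖F x - F y‖ ≤ L * ‖x - y‖)
    (hGmono : ∀ x y p q : H, p ∈ G x → q ∈ G y → 0 ≤ ⟪p - q, x - y⟫)
    (hGmax : ∀ x p : H, (∀ y q : H, q ∈ G y → 0 ≤ ⟪p - q, x - y⟫) → p ∈ G x)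
    (Ω : Set H) (hΩ : Ω = {x : H | -F x ∈ G x}) (hΩne : Ω.Nonempty)
    (μ : ℝ) (hμ : μ ∈ Set.Ioo (0 : ℝ) 1)
    (α : ℕ → ℝ) (hα : ∀ n, α n ∈ Set.Ico (0 : ℝ) 1)
    (x w y z : ℕ → H) (γ : ℕ → ℝ) (hγpos : ∀ n, 0 < γ n)
    (C Q : ℕ → Set H)
    (hw0 : w 0 = x 0)
    (hw : ∀ n, w (n + 1) = x (n + 1) + α (n + 1) • (x (n + 1) - x n))
    (hres : ∀ n, w n - γ n • F (w n) - y n ∈ γ n • G (y n))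
    (hz : ∀ n, z n = y n - γ n • (F (y n) - F (w n)))
    (hγrec : ∀ n, γ (n + 1) =
      if F (w n) ≠ F (y n)
      then min (μ * ‖w n - y n‖ / ‖F (w n) - F (y n)‖) (γ n)
      else γ n)
    (hC : ∀ n, C n = {u : H | ‖z n - u‖ ^ 2 ≤
      ‖w n - u‖ ^ 2 - (1 - μ ^ 2 * γ n ^ 2 / γ (n + 1) ^ 2) * ‖w n - y n‖ ^ 2})
    (hQ : ∀ n, Q n = {u : H | ⟪x n - u, x n - x 0⟫ ≤ 0})
    (hproj : ∀ n, x (n + 1) ∈ C n ∩ Q n ∧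
      ∀ v ∈ C n ∩ Q n, ‖x 0 - x (n + 1)‖ ≤ ‖x 0 - v‖) :
    ∀ n, Ω ⊆ C n ∩ Q n :=
  thm31_step1_general F G hFmono hGmono Ω hΩ μ hμ x w y z γ hγpos C Q hres hz hγrec hC hQ hproj
end

section
/- (Step 2 of the proof of Theorem 3.1, abstract form.) Let H be a real Hilbert space, x₀ ∈ H, and let (x_n)_{n≥0} be a sequence in H such that ⟨x_n − x_{n+1}, x_n − x₀⟩ ≤ 0 for all n and sup_n ‖x_n − x₀‖ < ∞. Then ‖x_{n+1} − x_n‖² ≤ ‖x_{n+1} − x₀‖² − ‖x_n − x₀‖² for all n, the sequence (‖x_n − x₀‖) is nondecreasing and convergent, and ‖x_{n+1} − x_n‖ → 0. -/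
open RealInnerProductSpace Filter Topology

/-! The hypothesis says that `x (n + 1)` lies beyond the hyperplane through `x n` orthogonal to
`x n - x₀`, so Pythagoras gives `‖x (n + 1) - x n‖² ≤ ‖x (n + 1) - x₀‖² - ‖x n - x₀‖²`. Hence the
distances to `x₀` increase, converge since they are bounded, and the steps are controlled by the
increments of a convergent sequence. -/

theorem norm_sub_sq_le_sub_of_inner_le_zero {H : Type*} [NormedAddCommGroup H]
    [InnerProductSpace ℝ H] {a b c : H} (h : ⟪a - b, a - c⟫ ≤ 0) :
    ‖b - a‖ ^ 2 ≤ ‖b - c‖ ^ 2 - ‖a - c‖ ^ 2 := by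
  have hsplit : b - c = (a - c) + (b - a) := by abel
  have hinner : ⟪a - c, b - a⟫ = -⟪a - b, a - c⟫ := by
    rw [real_inner_comm, ← inner_neg_left, neg_sub]
  rw [hsplit, norm_add_sq_real, hinner]
  linarith

theorem tendsto_zero_of_sq_le_sub_succ {a r : ℕ → ℝ} {l : ℝ} (ha : Tendsto a atTop (𝓝 l))
    (hr : ∀ n, 0 ≤ r n) (hra : ∀ n, r n ^ 2 ≤ a (n + 1) - a n) :
    Tendsto r atTop (𝓝 0) := by
  have hincr : Tendsto (fun n => a (n + 1) - a n) atTop (𝓝 0) := by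
    simpa using (ha.comp (tendsto_add_atTop_nat 1)).sub ha
  have hsq : Tendsto (fun n => r n ^ 2) atTop (𝓝 0) :=
    tendsto_of_tendsto_of_tendsto_of_le_of_le tendsto_const_nhds hincr (fun n => sq_nonneg _) hra
  simpa [Real.sqrt_sq (hr _)] using hsq.sqrt

theorem thm31_step2_abstract_general {H : Type*} [NormedAddCommGroup H] [InnerProductSpace ℝ H]
    (x₀ : H) (x : ℕ → H)
    (h1 : ∀ n, ⟪x n - x (n + 1), x n - x₀⟫ ≤ 0)
    (h2 : BddAbove (Set.range fun n => ‖x n - x₀‖)) :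
    (∀ n, ‖x (n + 1) - x n‖ ^ 2 ≤ ‖x (n + 1) - x₀‖ ^ 2 - ‖x n - x₀‖ ^ 2) ∧
      Monotone (fun n => ‖x n - x₀‖) ∧
      (∃ l : ℝ, Tendsto (fun n => ‖x n - x₀‖) atTop (nhds l)) ∧
      Tendsto (fun n => ‖x (n + 1) - x n‖) atTop (nhds 0) := by
  have hstep n := norm_sub_sq_le_sub_of_inner_le_zero (h1 n)
  have hmono : Monotone (fun n => ‖x n - x₀‖) := monotone_nat_of_le_succ fun n =>
    (pow_le_pow_iff_left₀ (norm_nonneg _) (norm_nonneg _) two_ne_zero).1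
      (by linarith [hstep n, sq_nonneg ‖x (n + 1) - x n‖])
  have hlim := tendsto_atTop_ciSup hmono h2
  exact ⟨hstep, hmono, ⟨_, hlim⟩,
    tendsto_zero_of_sq_le_sub_succ (hlim.pow 2) (fun _ => norm_nonneg _) hstep⟩

/-- Step 2 of the proof of Theorem 3.1 (abstract form). -/
theorem thm31_step2_abstract {H : Type*} [NormedAddCommGroup H] [InnerProductSpace ℝ H]
    [CompleteSpace H]
    (x₀ : H) (x : ℕ → H)
    (h1 : ∀ n, ⟪x n - x (n + 1), x n - x₀⟫ ≤ 0)
    (h2 : BddAbove (Set.range fun n => ‖x n - x₀‖)) :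
    (∀ n, ‖x (n + 1) - x n‖ ^ 2 ≤ ‖x (n + 1) - x₀‖ ^ 2 - ‖x n - x₀‖ ^ 2) ∧
      Monotone (fun n => ‖x n - x₀‖) ∧
      (∃ l : ℝ, Tendsto (fun n => ‖x n - x₀‖) atTop (nhds l)) ∧
      Tendsto (fun n => ‖x (n + 1) - x n‖) atTop (nhds 0) :=
  thm31_step2_abstract_general x₀ x h1 h2
end

section
/- (Shrinking-projection monotonicity, from the proof of Theorem 3.2.) Let H be a real Hilbert space, x₀ ∈ H, and let (C_n)_{n≥0} be nonempty closed convex subsets of H with C_{n+1} ⊆ C_n for all n, and suppose there exists u ∈ ⋂_n C_n. Let x_n be the metric projection of x₀ onto C_n for each n. Then ‖x_n − x₀‖ ≤ ‖x_{n+1} − x₀‖ ≤ ‖u − x₀‖ for all n, the sequence (‖x_n − x₀‖) converges, and ‖x_{n+1} − x_n‖ → 0. -/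
open Filter
open scoped RealInnerProductSpace Topology

/-
Proof idea: minimality of `x n` over `C n ∋ x (n + 1), u` gives the two inequalities, so
`‖x n - x₀‖` is monotone and bounded, hence convergent. Convexity of `C n` turns minimality into
the variational inequality `⟪x₀ - x n, v - x n⟫ ≤ 0`, which yields the Pythagorean inequality
`‖x (n + 1) - x n‖² + ‖x n - x₀‖² ≤ ‖x (n + 1) - x₀‖²`, and the gap
`‖x (n + 1) - x₀‖² - ‖x n - x₀‖²` tends to `0` because the norms converge.
-/

section Projection

variable {H : Type*} [NormedAddCommGroup H] [InnerProductSpace ℝ H]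

theorem real_inner_sub_nonpos_of_forall_norm_le {K : Set H} (hK : Convex ℝ K) {x₀ p : H}
    (hp : p ∈ K) (hmin : ∀ w ∈ K, ‖x₀ - p‖ ≤ ‖x₀ - w‖) {v : H} (hv : v ∈ K) :
    ⟪x₀ - p, v - p⟫ ≤ 0 := by
  have : Nonempty K := ⟨⟨p, hp⟩⟩
  have hinf : ‖x₀ - p‖ = ⨅ w : K, ‖x₀ - w‖ :=
    le_antisymm (le_ciInf fun w => hmin w w.2)
      (ciInf_le ⟨0, by rintro _ ⟨w, rfl⟩; positivity⟩ (⟨p, hp⟩ : K))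
  exact (norm_eq_iInf_iff_real_inner_le_zero hK hp).1 hinf v hv

theorem norm_sub_sq_add_norm_sub_sq_le_of_forall_norm_le {K : Set H} (hK : Convex ℝ K)
    {x₀ p : H} (hp : p ∈ K) (hmin : ∀ w ∈ K, ‖x₀ - p‖ ≤ ‖x₀ - w‖) {v : H} (hv : v ∈ K) :
    ‖v - p‖ ^ 2 + ‖p - x₀‖ ^ 2 ≤ ‖v - x₀‖ ^ 2 := by
  have hinner := real_inner_sub_nonpos_of_forall_norm_le hK hp hmin hv
  have hexpand : ‖v - x₀‖ ^ 2 = ‖v - p‖ ^ 2 - 2 * ⟪v - p, x₀ - p⟫ + ‖p - x₀‖ ^ 2 := by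
    rw [← norm_sub_rev x₀ p, ← norm_sub_sq_real, sub_sub_sub_cancel_right]
  rw [hexpand, real_inner_comm]
  linarith

end Projection

theorem tendsto_zero_of_sq_add_sq_le_sq_succ {a d : ℕ → ℝ} {l : ℝ}
    (ha : Tendsto a atTop (𝓝 l)) (hd : ∀ n, d n ^ 2 + a n ^ 2 ≤ a (n + 1) ^ 2)
    (hd₀ : ∀ n, 0 ≤ d n) : Tendsto d atTop (𝓝 0) := by
  have hgap : Tendsto (fun n => a (n + 1) ^ 2 - a n ^ 2) atTop (𝓝 0) := by
    simpa using ((ha.comp (tendsto_add_atTop_nat 1)).pow 2).sub (ha.pow 2)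
  refine squeeze_zero hd₀ (fun n => ?_) (by simpa using hgap.sqrt)
  exact (le_abs_self _).trans (Real.abs_le_sqrt (by linarith [hd n]))

theorem shrinking_projection_monotonicity_general {H : Type*} [NormedAddCommGroup H]
    [InnerProductSpace ℝ H]
    (x₀ : H) (C : ℕ → Set H)
    (hconvex : ∀ n, Convex ℝ (C n)) (hmono : ∀ n, C (n + 1) ⊆ C n)
    (u : H) (hu : ∀ n, u ∈ C n)
    (x : ℕ → H)
    (hproj : ∀ n, x n ∈ C n ∧ ∀ v ∈ C n, ‖x₀ - x n‖ ≤ ‖x₀ - v‖) :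
    (∀ n, ‖x n - x₀‖ ≤ ‖x (n + 1) - x₀‖ ∧ ‖x (n + 1) - x₀‖ ≤ ‖u - x₀‖) ∧
      (∃ l : ℝ, Tendsto (fun n => ‖x n - x₀‖) atTop (nhds l)) ∧
      Tendsto (fun n => ‖x (n + 1) - x n‖) atTop (nhds 0) := by
  have hsucc_mem n : x (n + 1) ∈ C n := hmono n (hproj (n + 1)).1
  have hle_succ n : ‖x n - x₀‖ ≤ ‖x (n + 1) - x₀‖ := by
    simpa only [norm_sub_rev x₀] using (hproj n).2 _ (hsucc_mem n)
  have hle_u n : ‖x n - x₀‖ ≤ ‖u - x₀‖ := by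
    simpa only [norm_sub_rev x₀] using (hproj n).2 u (hu n)
  have hconv : Tendsto (fun n => ‖x n - x₀‖) atTop (𝓝 (⨆ n, ‖x n - x₀‖)) :=
    tendsto_atTop_ciSup (monotone_nat_of_le_succ hle_succ)
      ⟨‖u - x₀‖, by rintro _ ⟨n, rfl⟩; exact hle_u n⟩
  refine ⟨fun n => ⟨hle_succ n, hle_u (n + 1)⟩, ⟨_, hconv⟩, ?_⟩
  exact tendsto_zero_of_sq_add_sq_le_sq_succ hconv
    (fun n => norm_sub_sq_add_norm_sub_sq_le_of_forall_norm_le (hconvex n) (hproj n).1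
      (hproj n).2 (hsucc_mem n))
    (fun _ => norm_nonneg _)

/-- Shrinking-projection monotonicity, from the proof of Theorem 3.2. -/
theorem shrinking_projection_monotonicity {H : Type*} [NormedAddCommGroup H]
    [InnerProductSpace ℝ H] [CompleteSpace H]
    (x₀ : H) (C : ℕ → Set H)
    (hne : ∀ n, (C n).Nonempty) (hclosed : ∀ n, IsClosed (C n))
    (hconvex : ∀ n, Convex ℝ (C n)) (hmono : ∀ n, C (n + 1) ⊆ C n)
    (u : H) (hu : ∀ n, u ∈ C n)
    (x : ℕ → H)
    (hproj : ∀ n, x n ∈ C n ∧ ∀ v ∈ C n, ‖x₀ - x n‖ ≤ ‖x₀ - v‖) :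
    (∀ n, ‖x n - x₀‖ ≤ ‖x (n + 1) - x₀‖ ∧ ‖x (n + 1) - x₀‖ ≤ ‖u - x₀‖) ∧
      (∃ l : ℝ, Tendsto (fun n => ‖x n - x₀‖) atTop (nhds l)) ∧
      Tendsto (fun n => ‖x (n + 1) - x n‖) atTop (nhds 0) :=
  shrinking_projection_monotonicity_general x₀ C hconvex hmono u hu x hproj
end

section
/- (Lemma 2.4.) Let C be a nonempty closed convex subset of a real Hilbert space H, let u ∈ H, and let q be the metric projection of u onto C. Let (x_n) be a sequence in H such that every weak sequential cluster point of (x_n) belongs to C (i.e., whenever a subsequence of (x_n) converges weakly to some x, then x ∈ C) and ‖x_n − u‖ ≤ ‖u − q‖ for all n. Then (x_n) converges to q in norm. -/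
/-!
The projection `q` is characterised by `⟪u - q, w - q⟫ ≤ 0` for all `w ∈ C`, and the bound
`‖x - u‖ ≤ ‖u - q‖` is equivalent to `‖x - q‖² ≤ 2 ⟪x - q, u - q⟫`. The sequence is bounded, so
every subsequence has a weakly convergent further subsequence; its weak limit `p` lies in `C`, hence
`2 ⟪xₙ - q, u - q⟫ → 2 ⟪p - q, u - q⟫ ≤ 0` along it, which forces `‖xₙ - q‖ → 0` there.
-/

open RealInnerProductSpace Filter Topology TopologicalSpace

theorem exists_subseq_tendsto_inner {𝕜 H : Type*} [RCLike 𝕜] [NormedAddCommGroup H]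
    [InnerProductSpace 𝕜 H] [CompleteSpace H] {y : ℕ → H} {R : ℝ} (hy : ∀ n, ‖y n‖ ≤ R) :
    ∃ p : H, ∃ ψ : ℕ → ℕ, StrictMono ψ ∧
      ∀ v, Tendsto (fun k => inner 𝕜 (y (ψ k)) v) atTop (𝓝 (inner 𝕜 p v)) := by
  -- sequential Banach–Alaoglu applies in the separable closed span `D` of the sequence
  set D := (Submodule.span 𝕜 (Set.range y)).topologicalClosure
  have hyD (n : ℕ) : y n ∈ D :=
    Submodule.le_topologicalClosure _ (Submodule.subset_span ⟨n, rfl⟩)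
  have : CompleteSpace D := (Submodule.isClosed_topologicalClosure _).completeSpace_coe
  have : SeparableSpace D := by
    have := (Set.countable_range y).isSeparable.span (R := 𝕜) |>.closure
    rw [← Submodule.topologicalClosure_coe] at this
    exact this.separableSpace
  let f (n : ℕ) : WeakDual 𝕜 D := (innerSL 𝕜 (y n)).comp D.subtypeL
  have hf (n : ℕ) : f n ∈ WeakDual.toStrongDual ⁻¹' Metric.closedBall 0 R := by
    rw [Set.mem_preimage, mem_closedBall_zero_iff]
    refine ContinuousLinearMap.opNorm_le_bound _ ((norm_nonneg _).trans (hy 0)) fun d => ?_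
    calc ‖inner 𝕜 (y n) (d : H)‖ ≤ ‖y n‖ * ‖d‖ := norm_inner_le_norm _ _
      _ ≤ R * ‖d‖ := by gcongr; exact hy n
  obtain ⟨φ, -, ψ, hψ, hφ⟩ := WeakDual.isSeqCompact_closedBall 𝕜 D 0 R hf
  set p : D := (InnerProductSpace.toDual 𝕜 D).symm (WeakDual.toStrongDual φ)
  refine ⟨p, ψ, hψ, fun v => ?_⟩
  have hproj (z : D) :
      inner 𝕜 (z : H) v = inner 𝕜 (z : H) (D.orthogonalProjectionOnto v : H) := by
    rw [← Submodule.inner_orthogonalProjectionOnto_eq_of_mem_left, Submodule.coe_inner]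
  have hpD (d : D) : inner 𝕜 (p : H) d = φ d := by
    rw [← Submodule.coe_inner, InnerProductSpace.toDual_symm_apply]; rfl
  have := ((WeakDual.eval_continuous (D.orthogonalProjectionOnto v)).tendsto φ).comp hφ
  rw [hproj p, hpD]
  simp only [hproj ⟨_, hyD _⟩]
  exact this

section Real

variable {H : Type*} [NormedAddCommGroup H] [InnerProductSpace ℝ H]

theorem real_inner_sub_le_zero_of_forall_norm_sub_le {C : Set H} (hC : Convex ℝ C) {u q : H}
    (hqC : q ∈ C) (hq : ∀ v ∈ C, ‖u - q‖ ≤ ‖u - v‖) {w : H} (hw : w ∈ C) :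
    ⟪u - q, w - q⟫ ≤ 0 := by
  have : Nonempty C := ⟨⟨q, hqC⟩⟩
  have hinf : ‖u - q‖ = ⨅ v : C, ‖u - v‖ :=
    le_antisymm (le_ciInf fun v => hq v v.2)
      (ciInf_le (f := fun v : C => ‖u - v‖) ⟨0, Set.forall_mem_range.2 fun _ => norm_nonneg _⟩
        ⟨q, hqC⟩)
  exact (norm_eq_iInf_iff_real_inner_le_zero hC hqC).mp hinf w hw

theorem norm_sub_sq_le_two_mul_inner {x u q : H} (h : ‖x - u‖ ≤ ‖u - q‖) :
    ‖x - q‖ ^ 2 ≤ 2 * ⟪x - q, u - q⟫ := by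
  have hsq := norm_sub_sq_real (x - q) (u - q)
  rw [sub_sub_sub_cancel_right] at hsq
  nlinarith [pow_le_pow_left₀ (norm_nonneg _) h 2]

theorem tendsto_of_tendsto_inner_of_norm_sub_le {ι : Type*} {l : Filter ι} [l.NeBot]
    {y : ι → H} {u q p : H} (hp : ⟪u - q, p - q⟫ ≤ 0)
    (hweak : Tendsto (fun k => ⟪y k, u - q⟫) l (𝓝 ⟪p, u - q⟫))
    (hy : ∀ k, ‖y k - u‖ ≤ ‖u - q‖) :
    Tendsto y l (𝓝 q) := by
  have hbound (k : ι) := norm_sub_sq_le_two_mul_inner (hy k)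
  have hlim : Tendsto (fun k => 2 * ⟪y k - q, u - q⟫) l (𝓝 (2 * ⟪p - q, u - q⟫)) := by
    simp only [inner_sub_left]
    exact (hweak.sub tendsto_const_nhds).const_mul 2
  have hzero : ⟪p - q, u - q⟫ = 0 := by
    refine le_antisymm (real_inner_comm (p - q) (u - q) ▸ hp) ?_
    have := ge_of_tendsto' hlim fun k => (sq_nonneg _).trans (hbound k)
    linarith
  have hsq : Tendsto (fun k => ‖y k - q‖ ^ 2) l (𝓝 0) :=
    squeeze_zero (fun _ => sq_nonneg _) hbound (by rwa [hzero, mul_zero] at hlim)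
  rw [tendsto_iff_norm_sub_tendsto_zero]
  simpa using hsq.sqrt

end Real

theorem lemma24_general {H : Type*} [NormedAddCommGroup H] [InnerProductSpace ℝ H]
    [CompleteSpace H]
    (C : Set H) (hCconvex : Convex ℝ C)
    (u q : H) (hq : q ∈ C ∧ ∀ v ∈ C, ‖u - q‖ ≤ ‖u - v‖)
    (x : ℕ → H)
    (hcluster : ∀ (φ : ℕ → ℕ), StrictMono φ → ∀ p : H,
      (∀ v : H, Tendsto (fun k => ⟪x (φ k), v⟫) atTop (nhds ⟪p, v⟫)) → p ∈ C)
    (hbound : ∀ n, ‖x n - u‖ ≤ ‖u - q‖) :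
    Tendsto x atTop (nhds q) := by
  obtain ⟨hqC, hqmin⟩ := hq
  refine tendsto_of_subseq_tendsto fun ns hns => ?_
  obtain ⟨φ, hφ, hφns⟩ := strictMono_subseq_of_tendsto_atTop hns
  have hxbdd (k : ℕ) : ‖x (ns (φ k))‖ ≤ ‖u‖ + ‖u - q‖ :=
    (norm_le_norm_add_norm_sub' _ u).trans (by gcongr; exact hbound _)
  obtain ⟨p, ψ, hψ, hweak⟩ := exists_subseq_tendsto_inner (𝕜 := ℝ) hxbdd
  have hpC : p ∈ C := hcluster _ (hφns.comp hψ) p hweak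
  exact ⟨φ ∘ ψ, tendsto_of_tendsto_inner_of_norm_sub_le
    (real_inner_sub_le_zero_of_forall_norm_sub_le hCconvex hqC hqmin hpC)
    (hweak (u - q)) fun k => hbound _⟩

/-- Lemma 2.4: if every weak sequential cluster point of `(xₙ)` lies in `C` and
`‖xₙ - u‖ ≤ ‖u - q‖` for all `n`, where `q = P_C u`, then `xₙ → q` in norm. -/
theorem lemma24 {H : Type*} [NormedAddCommGroup H] [InnerProductSpace ℝ H]
    [CompleteSpace H]
    (C : Set H) (hCne : C.Nonempty) (hCclosed : IsClosed C) (hCconvex : Convex ℝ C)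
    (u q : H) (hq : q ∈ C ∧ ∀ v ∈ C, ‖u - q‖ ≤ ‖u - v‖)
    (x : ℕ → H)
    (hcluster : ∀ (φ : ℕ → ℕ), StrictMono φ → ∀ p : H,
      (∀ v : H, Tendsto (fun k => ⟪x (φ k), v⟫) atTop (nhds ⟪p, v⟫)) → p ∈ C)
    (hbound : ∀ n, ‖x n - u‖ ≤ ‖u - q‖) :
    Tendsto x atTop (nhds q) :=
  lemma24_general C hCconvex u q hq x hcluster hbound
end
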